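/- Fix x and suppose p(x | y = k) > 0 for at least one k, π_k > 0 for all k, Π ∈ ℝ^{M×K} row-stochastic with full column rank, π̄ ∈ Δ°_{M-1}. Define η(x) ∈ Δ_{K-1} by η_k(x) = π_k p(x|y=k)/p(x) with p(x) = Σ_k π_k p(x|y=k), and η̄_m(x) = π̄_m p^m(x) / Σ_{m'} π̄_{m'} p^{m'}(x) with p^m(x) = Σ_k Π_{m,k} p(x|y=k). Then knowing η̄(x), π, π̄, and Π determines η(x) uniquely: η(x) is the unique w ∈ Δ_{K-1} such that N(D_{π̄} Π D_π^{-1} w) = η̄(x), where N is normalization by the entry sum. -/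

import Mathlib

open Finset

/-!
The map `Q w = N (D_{π̄} Π D_π⁻¹ w)` sends the posterior `η` to the surrogate posterior `η̄`,
because `D_π⁻¹ η = p / p(x)` and `N` forgets the positive scalar `1 / p(x)`. If also
`Q w = η̄`, then `A w` and `A η` are proportional, so injectivity of `A` (inherited from `Π`
since the diagonal factors are invertible) makes `w` proportional to `η`, and the
proportionality constant is `1` because both have entry sum `1`.
-/

open Matrix Function

section Normalize

variable {ι 𝕜 : Type*} [Fintype ι] [Field 𝕜]

def normalizeBySum (a : ι → 𝕜) : ι → 𝕜 := (∑ i, a i)⁻¹ • a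

lemma normalizeBySum_apply (a : ι → 𝕜) (j : ι) :
    normalizeBySum a j = a j / ∑ i, a i := by
  simp [normalizeBySum, div_eq_inv_mul]

lemma sum_smul_apply (c : 𝕜) (a : ι → 𝕜) : ∑ i, (c • a) i = c * ∑ i, a i := by
  simp [Finset.mul_sum]

lemma sum_normalizeBySum {a : ι → 𝕜} (ha : ∑ i, a i ≠ 0) :
    ∑ i, normalizeBySum a i = 1 := by
  rw [normalizeBySum, sum_smul_apply, inv_mul_cancel₀ ha]

lemma normalizeBySum_smul {c : 𝕜} (hc : c ≠ 0) (a : ι → 𝕜) :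
    normalizeBySum (c • a) = normalizeBySum a := by
  rw [normalizeBySum, normalizeBySum, sum_smul_apply, smul_smul, _root_.mul_inv_rev, mul_assoc,
    inv_mul_cancel₀ hc, mul_one]

lemma exists_eq_smul_of_normalizeBySum_eq {a b : ι → 𝕜} (hb : ∑ i, b i ≠ 0)
    (h : normalizeBySum a = normalizeBySum b) : ∃ c : 𝕜, a = c • b := by
  have ha : ∑ i, a i ≠ 0 := by
    intro ha
    have hsum := sum_normalizeBySum hb
    rw [← h] at hsum
    simp [normalizeBySum, ha] at hsum
  refine ⟨(∑ i, a i) * (∑ i, b i)⁻¹, ?_⟩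
  rw [mul_smul, ← normalizeBySum, ← h, normalizeBySum, smul_inv_smul₀ ha]

lemma eq_of_normalizeBySum_mulVec_eq {κ : Type*} [Fintype κ] {A : Matrix ι κ 𝕜}
    (hA : Injective A.mulVec) {v w : κ → 𝕜} (hv : ∑ k, v k = 1) (hw : ∑ k, w k = 1)
    (hAv : ∑ i, (A *ᵥ v) i ≠ 0) (h : normalizeBySum (A *ᵥ w) = normalizeBySum (A *ᵥ v)) :
    w = v := by
  obtain ⟨c, hc⟩ := exists_eq_smul_of_normalizeBySum_eq hAv h
  have hwv : w = c • v := hA (by rw [hc, mulVec_smul])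
  have hc1 : c = 1 := by
    have hsum : ∑ k, w k = ∑ k, (c • v) k := by rw [hwv]
    rwa [sum_smul_apply, hw, hv, mul_one, eq_comm] at hsum
  rw [hwv, hc1, one_smul]

end Normalize

section Matrix

variable {ι κ : Type*}

lemma Matrix.mulVec_injective_diagonal {𝕜 : Type*} [Field 𝕜] [Fintype κ] [DecidableEq κ]
    {d : κ → 𝕜} (hd : ∀ k, d k ≠ 0) : Injective (diagonal d).mulVec :=
  mulVec_injective_of_isUnit (isUnit_diagonal.2 (Pi.isUnit_iff.2 fun k => (hd k).isUnit))

lemma Matrix.mulVec_injective_diagonal_mul_mul_diagonal {𝕜 : Type*} [Field 𝕜] [Fintype ι] [Fintype κ]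
    [DecidableEq ι] [DecidableEq κ] {d : ι → 𝕜} {e : κ → 𝕜} {P : Matrix ι κ 𝕜}
    (hd : ∀ i, d i ≠ 0) (he : ∀ k, e k ≠ 0) (hP : Injective P.mulVec) :
    Injective (diagonal d * P * diagonal e).mulVec := by
  intro u v huv
  simp only [← mulVec_mulVec] at huv
  exact mulVec_injective_diagonal he (hP (mulVec_injective_diagonal hd huv))

lemma Matrix.exists_ne_zero_of_injective_mulVec {R : Type*} [Semiring R] [Nontrivial R] [Fintype κ]
    {P : Matrix ι κ R} (hP : Injective P.mulVec) (k : κ) : ∃ i, P i k ≠ 0 := by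
  classical
  by_contra! hcol
  have h : P *ᵥ Pi.single k 1 = P *ᵥ 0 := by
    ext i
    simp [hcol]
  simpa using congrFun (hP h) k

lemma sum_mul_mulVec_pos [Fintype ι] [Fintype κ] {P : Matrix ι κ ℝ} (hP0 : ∀ i k, 0 ≤ P i k)
    (hP : Injective P.mulVec) {d : ι → ℝ} (hd : ∀ i, 0 < d i) {p : κ → ℝ}
    (hp0 : ∀ k, 0 ≤ p k) (hp : ∃ k, 0 < p k) : 0 < ∑ i, d i * (P *ᵥ p) i := by
  obtain ⟨k, hk⟩ := hp
  obtain ⟨i, hi⟩ := P.exists_ne_zero_of_injective_mulVec hP k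
  have hPp0 : ∀ j, 0 ≤ (P *ᵥ p) j := fun j =>
    sum_nonneg fun l _ => mul_nonneg (hP0 j l) (hp0 l)
  have hPpi : 0 < (P *ᵥ p) i :=
    sum_pos' (fun l _ => mul_nonneg (hP0 i l) (hp0 l))
      ⟨k, mem_univ k, mul_pos ((hP0 i k).lt_of_ne' hi) hk⟩
  exact sum_pos' (fun j _ => mul_nonneg (hd j).le (hPp0 j))
    ⟨i, mem_univ i, mul_pos (hd i) hPpi⟩

end Matrix

theorem posterior_identifiable_from_surrogate_general
    (K M : ℕ) (p π : Fin K → ℝ) (πb : Fin M → ℝ)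
    (Pi : Matrix (Fin M) (Fin K) ℝ)
    (hp0 : ∀ k, 0 ≤ p k) (hpex : ∃ k, 0 < p k)
    (hπ : ∀ k, 0 < π k)
    (hπb : ∀ m, 0 < πb m)
    (hPi0 : ∀ m k, 0 ≤ Pi m k)
    (hrank : Function.Injective Pi.mulVec)
    (px : ℝ) (hpx : px = ∑ k, π k * p k)
    (η : Fin K → ℝ) (hη : ∀ k, η k = π k * p k / px)
    (pm : Fin M → ℝ) (hpm : ∀ m, pm m = ∑ k, Pi m k * p k)
    (ηb : Fin M → ℝ) (hηb : ∀ m, ηb m = πb m * pm m / ∑ m', πb m' * pm m')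
    (N : (Fin M → ℝ) → Fin M → ℝ) (hN : ∀ a j, N a j = a j / ∑ i, a i)
    (A : Matrix (Fin M) (Fin K) ℝ)
    (hA : A = Matrix.diagonal πb * Pi * Matrix.diagonal π⁻¹) :
    ((∀ i, 0 ≤ η i) ∧ ∑ i, η i = 1) ∧ N (A.mulVec η) = ηb ∧
      ∀ w : Fin K → ℝ, (∀ i, 0 ≤ w i) → ∑ i, w i = 1 →
        N (A.mulVec w) = ηb → w = η := by
  have hpx0 : 0 < px := by
    obtain ⟨k, hk⟩ := hpex
    exact hpx ▸ sum_pos' (fun l _ => mul_nonneg (hπ l).le (hp0 l))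
      ⟨k, mem_univ k, mul_pos (hπ k) hk⟩
  have hN' : N = normalizeBySum := funext fun a => funext fun j => by
    rw [hN, normalizeBySum_apply]
  have hpm' : pm = Pi *ᵥ p := funext hpm
  have hη' : η = px⁻¹ • (π * p) := funext fun k => by simp [hη, div_eq_inv_mul]
  have hηb' : ηb = normalizeBySum (πb * pm) := funext fun m => by
    simp [hηb, normalizeBySum_apply]
  have hAη : A *ᵥ η = px⁻¹ • (πb * pm) := by
    have hDη : diagonal π⁻¹ *ᵥ η = px⁻¹ • p := funext fun k => by
      simp only [mulVec_diagonal, _root_.Pi.inv_apply, hη, _root_.Pi.smul_apply, smul_eq_mul]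
      field_simp [(hπ k).ne']
    rw [hA, ← mulVec_mulVec, ← mulVec_mulVec, hDη, mulVec_smul, ← hpm', mulVec_smul]
    ext m
    simp [mulVec_diagonal]
  have hsum : 0 < ∑ m, πb m * pm m := hpm' ▸ sum_mul_mulVec_pos hPi0 hrank hπb hp0 hpex
  have hη1 : ∑ k, η k = 1 := by
    rw [hη', sum_smul_apply]; simp [← hpx, hpx0.ne']
  have hNη : N (A *ᵥ η) = ηb := by
    rw [hN', hAη, normalizeBySum_smul (inv_ne_zero hpx0.ne'), hηb']
  refine ⟨⟨fun k => ?_, hη1⟩, hNη, fun w _ hw1 hNw => ?_⟩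
  · rw [hη]; exact div_nonneg (mul_nonneg (hπ k).le (hp0 k)) hpx0.le
  · have hAinj : Injective A.mulVec := hA ▸ mulVec_injective_diagonal_mul_mul_diagonal
      (fun m => (hπb m).ne') (fun k => inv_ne_zero (hπ k).ne') hrank
    refine eq_of_normalizeBySum_mulVec_eq hAinj hη1 hw1 ?_ (hN' ▸ hNw.trans hNη.symm)
    rw [hAη, sum_smul_apply]
    exact mul_ne_zero (inv_ne_zero hpx0.ne') hsum.ne'

/-- Identifiability: the original class posterior η is the unique simplex vector w
with N(D_{π̄} Π D_π^{-1} w) = η̄. -/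
theorem posterior_identifiable_from_surrogate
    (K M : ℕ) (p π : Fin K → ℝ) (πb : Fin M → ℝ)
    (Pi : Matrix (Fin M) (Fin K) ℝ)
    (hp0 : ∀ k, 0 ≤ p k) (hpex : ∃ k, 0 < p k)
    (hπ : ∀ k, 0 < π k) (hπsum : ∑ k, π k = 1)
    (hπb : ∀ m, 0 < πb m) (hπbsum : ∑ m, πb m = 1)
    (hPi0 : ∀ m k, 0 ≤ Pi m k) (hPirow : ∀ m, ∑ k, Pi m k = 1)
    (hrank : Function.Injective Pi.mulVec)
    (px : ℝ) (hpx : px = ∑ k, π k * p k)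
    (η : Fin K → ℝ) (hη : ∀ k, η k = π k * p k / px)
    (pm : Fin M → ℝ) (hpm : ∀ m, pm m = ∑ k, Pi m k * p k)
    (ηb : Fin M → ℝ) (hηb : ∀ m, ηb m = πb m * pm m / ∑ m', πb m' * pm m')
    (N : (Fin M → ℝ) → Fin M → ℝ) (hN : ∀ a j, N a j = a j / ∑ i, a i)
    (A : Matrix (Fin M) (Fin K) ℝ)
    (hA : A = Matrix.diagonal πb * Pi * Matrix.diagonal π⁻¹) :
    ((∀ i, 0 ≤ η i) ∧ ∑ i, η i = 1) ∧ N (A.mulVec η) = ηb ∧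
      ∀ w : Fin K → ℝ, (∀ i, 0 ≤ w i) → ∑ i, w i = 1 →
        N (A.mulVec w) = ηb → w = η :=
  posterior_identifiable_from_surrogate_general K M p π πb Pi hp0 hpex hπ hπb hPi0 hrank px hpx η hη
    pm hpm ηb hηb N hN A hA
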